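/- If n ≥ 3 is odd and n + 2 is prime, then the labeling of GP(n,1) assigning i to v_i for 1 ≤ i ≤ n, n+2+i to u_i for 1 ≤ i ≤ n−1, and n+2 to u_n, is injective with values in {1,...,2n+1} and gives coprime labels to every pair of adjacent vertices. -/

import Mathlib

/-- The prism graph `GP(n,1)`: two `n`-cycles `v` (inl) and `u` (inr) joined by a
perfect matching. -/
def prismGraph (n : ℕ) : SimpleGraph (ZMod n ⊕ ZMod n) :=
  SimpleGraph.fromRel (fun x y =>
    (∃ i : ZMod n, x = Sum.inl i ∧ y = Sum.inl (i + 1)) ∨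
    (∃ i : ZMod n, x = Sum.inr i ∧ y = Sum.inr (i + 1)) ∨
    (∃ i : ZMod n, x = Sum.inl i ∧ y = Sum.inr i))

/-- The labeling: `v_i ↦ i`, `u_i ↦ n+2+i` for `1 ≤ i ≤ n-1`, `u_n ↦ n+2`
(vertex of value `j` represents index `j+1`). -/
def prismLabel6 (n : ℕ) : ZMod n ⊕ ZMod n → ℕ
  | Sum.inl i => i.val + 1
  | Sum.inr i => if i.val = n - 1 then n + 2 else n + 2 + (i.val + 1)

/-!
The `v`-labels fill `[1, n]` and the `u`-labels fill `[n + 2, 2n + 1]`, so the labeling is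
injective. Along both cycles adjacent labels are consecutive integers (or one of them is `1`),
except for the pair `u_{n-1}, u_n` with labels `2n + 1` and `n + 2`, which differ by
`n - 1 < n + 2`. A rung `v_i u_i` carries labels `i` and `i + (n + 2)` with `0 < i < n + 2`,
except `v_n u_n`, whose labels `n` and `n + 2` differ by `2`. Since `n + 2` is prime and `n` is
odd, every such pair is coprime.
-/

open Nat

lemma ZMod.val_add_one_cases {n : ℕ} [NeZero n] (i : ZMod n) :
    (i.val = n - 1 ∧ (i + 1).val = 0) ∨ (i.val + 1 < n ∧ (i + 1).val = i.val + 1) := by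
  have hsucc : (i + 1).val = (i.val + 1) % n := by
    rw [ZMod.val_add, ZMod.val_one_eq_one_mod, Nat.add_mod_mod]
  rcases (show i.val + 1 ≤ n from i.val_lt).lt_or_eq with hlt | heq
  · exact .inr ⟨hlt, hsucc.trans (Nat.mod_eq_of_lt hlt)⟩
  · exact .inl ⟨by omega, by rw [hsucc, heq, Nat.mod_self]⟩

lemma Nat.coprime_add_one_right (m : ℕ) : Coprime m (m + 1) :=
  coprime_self_add_right.mpr (coprime_one_right m)

section

variable {n : ℕ}

@[simp]
lemma prismLabel6_inl (i : ZMod n) : prismLabel6 n (.inl i) = i.val + 1 := rfl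

lemma prismLabel6_inr_of_val_eq {i : ZMod n} (h : i.val = n - 1) :
    prismLabel6 n (.inr i) = n + 2 :=
  if_pos h

lemma prismLabel6_inr_of_val_ne {i : ZMod n} (h : i.val ≠ n - 1) :
    prismLabel6 n (.inr i) = n + 2 + (i.val + 1) :=
  if_neg h

lemma prismLabel6_inl_mem_Icc [NeZero n] (i : ZMod n) :
    prismLabel6 n (.inl i) ∈ Finset.Icc 1 n := by
  simpa using i.val_lt

lemma prismLabel6_inr_mem_Icc [NeZero n] (i : ZMod n) :
    prismLabel6 n (.inr i) ∈ Finset.Icc (n + 2) (2 * n + 1) := by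
  have hi := i.val_lt
  by_cases hlast : i.val = n - 1
  · rw [prismLabel6_inr_of_val_eq hlast, Finset.mem_Icc]; omega
  · rw [prismLabel6_inr_of_val_ne hlast, Finset.mem_Icc]; omega

lemma prismLabel6_mem_Icc [NeZero n] (x : ZMod n ⊕ ZMod n) :
    prismLabel6 n x ∈ Finset.Icc 1 (2 * n + 1) := by
  rcases x with i | i
  · exact Finset.Icc_subset_Icc le_rfl (by omega) (prismLabel6_inl_mem_Icc i)
  · exact Finset.Icc_subset_Icc (by omega) le_rfl (prismLabel6_inr_mem_Icc i)

lemma prismLabel6_inr_injective [NeZero n] : Function.Injective (prismLabel6 n ∘ .inr) := by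
  intro i j h
  apply ZMod.val_injective n
  simp only [Function.comp_apply, prismLabel6] at h
  split_ifs at h <;> omega

lemma prismLabel6_injective [NeZero n] : Function.Injective (prismLabel6 n) := by
  have hsplit : prismLabel6 n = Sum.elim (prismLabel6 n ∘ .inl) (prismLabel6 n ∘ .inr) := by
    ext (i | i) <;> rfl
  rw [hsplit]
  refine Function.Injective.sumElim ?_ prismLabel6_inr_injective fun i j h => ?_
  · exact fun i j h => ZMod.val_injective n (by simpa using h)
  · have hi := Finset.mem_Icc.mp (prismLabel6_inl_mem_Icc i)
    have hj := Finset.mem_Icc.mp (prismLabel6_inr_mem_Icc j)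
    simp only [Function.comp_apply] at h
    omega

lemma coprime_prismLabel6_inl_succ [NeZero n] (i : ZMod n) :
    Coprime (prismLabel6 n (.inl i)) (prismLabel6 n (.inl (i + 1))) := by
  rcases i.val_add_one_cases with ⟨-, hsucc⟩ | ⟨-, hsucc⟩ <;>
    simp only [prismLabel6_inl, hsucc]
  · exact coprime_one_right _
  · exact coprime_add_one_right _

lemma coprime_prismLabel6_inr_succ (hn : 2 ≤ n) (hp : (n + 2).Prime) (i : ZMod n) :
    Coprime (prismLabel6 n (.inr i)) (prismLabel6 n (.inr (i + 1))) := by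
  have : NeZero n := ⟨by omega⟩
  rcases i.val_add_one_cases with ⟨hlast, hsucc⟩ | ⟨hlt, hsucc⟩
  · rw [prismLabel6_inr_of_val_eq hlast, prismLabel6_inr_of_val_ne (by omega), hsucc]
    exact coprime_add_one_right _
  · rw [prismLabel6_inr_of_val_ne (by omega)]
    by_cases hnext : i.val + 1 = n - 1
    · rw [prismLabel6_inr_of_val_eq (hsucc ▸ hnext)]
      exact coprime_self_add_left.mpr (coprime_of_lt_prime (by omega) (by omega) hp).symm
    · rw [prismLabel6_inr_of_val_ne (hsucc ▸ hnext), hsucc, ← add_assoc _ (i.val + 1)]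
      exact coprime_add_one_right _

lemma coprime_prismLabel6_inl_inr (hodd : Odd n) (hp : (n + 2).Prime) (i : ZMod n) :
    Coprime (prismLabel6 n (.inl i)) (prismLabel6 n (.inr i)) := by
  have : NeZero n := ⟨hodd.pos.ne'⟩
  have hi := i.val_lt
  rw [prismLabel6_inl]
  by_cases hlast : i.val = n - 1
  · rw [prismLabel6_inr_of_val_eq hlast, show i.val + 1 = n by omega]
    exact coprime_self_add_right.mpr hodd.coprime_two_right
  · rw [prismLabel6_inr_of_val_ne hlast]
    exact coprime_add_self_right.mpr (coprime_of_lt_prime (by omega) (by omega) hp).symm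

lemma coprime_prismLabel6_of_adj (hn : 2 ≤ n) (hodd : Odd n) (hp : (n + 2).Prime)
    {x y : ZMod n ⊕ ZMod n} (hadj : (prismGraph n).Adj x y) :
    Coprime (prismLabel6 n x) (prismLabel6 n y) := by
  have : NeZero n := ⟨by omega⟩
  rw [prismGraph, SimpleGraph.fromRel_adj] at hadj
  rcases hadj.2 with (⟨i, rfl, rfl⟩ | ⟨i, rfl, rfl⟩ | ⟨i, rfl, rfl⟩) |
    (⟨i, rfl, rfl⟩ | ⟨i, rfl, rfl⟩ | ⟨i, rfl, rfl⟩)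
  exacts [coprime_prismLabel6_inl_succ i, coprime_prismLabel6_inr_succ hn hp i,
    coprime_prismLabel6_inl_inr hodd hp i, (coprime_prismLabel6_inl_succ i).symm,
    (coprime_prismLabel6_inr_succ hn hp i).symm, (coprime_prismLabel6_inl_inr hodd hp i).symm]

end

theorem prism_coprime_labeling_of_nPlusTwo_prime (n : ℕ) (hn : 3 ≤ n)
    (hodd : Odd n) (hp : Nat.Prime (n + 2)) :
    Function.Injective (prismLabel6 n) ∧
    (∀ x, prismLabel6 n x ∈ Finset.Icc 1 (2 * n + 1)) ∧
    (∀ x y, (prismGraph n).Adj x y →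
      Nat.Coprime (prismLabel6 n x) (prismLabel6 n y)) := by
  have : NeZero n := ⟨by omega⟩
  exact ⟨prismLabel6_injective, prismLabel6_mem_Icc,
    fun _ _ => coprime_prismLabel6_of_adj (by omega) hodd hp⟩
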